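/- Suppose n = dim_ℂ V ≤ r - 1. Then the element z = (1 - J_1J_2)(1 - J_1J_3)⋯(1 - J_1J_r) · Σ_{σ ∈ S_r} sgn(σ) ρ(σ) of End(⊗_ℝ^r V) is zero, where ρ(σ) permutes tensor slots; consequently, the linear map from the span of marked diagrams to End_{U(V,h)}(⊗_ℝ^r V) is not injective when n < r. -/

import Mathlib

open scoped TensorProduct
open PiTensorProduct

variable (V : Type*) [AddCommGroup V] [Module ℂ V] [Module ℝ V] [IsScalarTower ℝ ℂ V]

/-- Multiplication by `i` on `V`, as an `ℝ`-linear map. -/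
noncomputable def mulI : V →ₗ[ℝ] V :=
  (Complex.I • (LinearMap.id : V →ₗ[ℂ] V)).restrictScalars ℝ

variable (r : ℕ)

/-- The operator `J_l` on `⨂[ℝ]^r V` applying multiplication by `i` in the `l`-th slot. -/
noncomputable def Jop (l : Fin r) : Module.End ℝ (⨂[ℝ] _ : Fin r, V) :=
  PiTensorProduct.map (fun i => if i = l then mulI V else LinearMap.id)

/-- The diagonal action of `g ∈ GL_ℂ(V)` on `⨂[ℝ]^r V`. -/
noncomputable def diag (g : V ≃ₗ[ℂ] V) : Module.End ℝ (⨂[ℝ] _ : Fin r, V) :=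
  PiTensorProduct.map (fun _ => g.toLinearMap.restrictScalars ℝ)

lemma Jop_comm (l m : Fin r) : Commute (Jop V r l) (Jop V r m) := by
  show _ * _ = _ * _
  rw [Module.End.mul_eq_comp, Module.End.mul_eq_comp]
  unfold Jop
  rw [← PiTensorProduct.map_comp, ← PiTensorProduct.map_comp]
  congr 1
  funext i
  split_ifs <;> simp

/-- The action `ρ(σ)` of a permutation `σ ∈ S_r` on `⨂[ℝ]^r V`, permuting the slots. -/
noncomputable def permAct {V : Type*} [AddCommGroup V] [Module ℝ V] (r : ℕ)
    (σ : Equiv.Perm (Fin r)) : Module.End ℝ (⨂[ℝ] _ : Fin r, V) :=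
  (PiTensorProduct.reindex ℝ (fun _ : Fin r => V) σ).toLinearMap


/-!
Since `J_l² = -1` and the `J_l` commute, `(1 - J_m J_l) J_l = J_l + J_m = (1 - J_m J_l) J_m`;
hence the product `P = ∏_{l ≠ 1} (1 - J_1 J_l)` satisfies `P J_l = P J_1` for every `l`. As
`ρ(σ) J_l = J_{σ l} ρ(σ)`, the map `Z = P · Σ_σ sgn(σ) ρ(σ)` then changes sign under every swap
of two slots, and `Z J_l` does not depend on `l`. So `Z (v_1 ⊗ ⋯ ⊗ v_r) = 0` whenever
`v_a = c v_b` with `a ≠ b` and `c ∈ ℂ`: for `c = 1` by antisymmetry, and for `c = i` because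
moving the factor `i` from slot `a` to slot `b` is the same as swapping the two slots.
When `dim_ℂ V < r`, every tensor of vectors from a real basis `{e_k, i e_k}` has two slots on
the same complex line `ℂ e_k`, so `Z = 0`.
-/

section PermAct

variable {V : Type*} [AddCommGroup V] [Module ℝ V] {r : ℕ}

theorem permAct_tprod (σ : Equiv.Perm (Fin r)) (v : Fin r → V) :
    permAct r σ (tprod ℝ v) = tprod ℝ (v ∘ σ.symm) :=
  reindex_tprod σ v

theorem permAct_mul (σ τ : Equiv.Perm (Fin r)) :
    permAct (V := V) r σ * permAct r τ = permAct r (σ * τ) := by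
  rw [permAct, permAct, permAct, Module.End.mul_eq_comp, ← LinearEquiv.coe_trans, reindex_trans]
  rfl

theorem permAct_swap_tprod_of_eq {a b : Fin r} {v : Fin r → V} (hv : v a = v b) :
    permAct r (Equiv.swap a b) (tprod ℝ v) = tprod ℝ v := by
  rw [permAct_tprod, Equiv.symm_swap, Equiv.comp_swap_eq_update, hv, Function.update_eq_self,
    ← hv, Function.update_eq_self]

variable (V r) in
noncomputable def antisymmetrizer : Module.End ℝ (⨂[ℝ] _ : Fin r, V) :=
  ∑ σ : Equiv.Perm (Fin r), (Equiv.Perm.sign σ : ℤ) • permAct (V := V) r σ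

theorem antisymmetrizer_mul_permAct (τ : Equiv.Perm (Fin r)) :
    antisymmetrizer V r * permAct r τ = (Equiv.Perm.sign τ : ℤ) • antisymmetrizer V r := by
  simp only [antisymmetrizer, zsmul_eq_mul, Finset.sum_mul, Finset.mul_sum]
  refine Fintype.sum_equiv (Equiv.mulRight τ) _ _ fun σ => ?_
  have hsign : (Equiv.Perm.sign τ : ℤ) * Equiv.Perm.sign (σ * τ) = Equiv.Perm.sign σ := by
    rw [Equiv.Perm.sign_mul, mul_comm (Equiv.Perm.sign σ), ← Units.val_mul, ← mul_assoc,
      Int.units_mul_self, one_mul]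
  rw [Equiv.coe_mulRight, mul_assoc, permAct_mul, ← mul_assoc, ← Int.cast_mul, hsign]

theorem mul_antisymmetrizer_apply_permAct_swap (P : Module.End ℝ (⨂[ℝ] _ : Fin r, V))
    {a b : Fin r} (hab : a ≠ b) (x : ⨂[ℝ] _ : Fin r, V) :
    (P * antisymmetrizer V r) (permAct r (Equiv.swap a b) x) = -(P * antisymmetrizer V r) x := by
  rw [← Module.End.mul_apply, mul_assoc, antisymmetrizer_mul_permAct, Equiv.Perm.sign_swap hab,
    Units.val_neg, Units.val_one, neg_one_zsmul, Module.End.mul_apply, LinearMap.neg_apply,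
    map_neg, Module.End.mul_apply]

theorem apply_tprod_eq_zero_of_eq {M : Type*} [AddCommGroup M] [Module ℝ M]
    {Z : (⨂[ℝ] _ : Fin r, V) →ₗ[ℝ] M}
    (hswap : ∀ a b, a ≠ b → ∀ x, Z (permAct r (Equiv.swap a b) x) = -Z x)
    {a b : Fin r} (hab : a ≠ b) {v : Fin r → V} (hv : v a = v b) : Z (tprod ℝ v) = 0 := by
  have h := hswap a b hab (tprod ℝ v)
  rw [permAct_swap_tprod_of_eq hv] at h
  have := IsAddTorsionFree.of_isTorsionFree ℝ M
  exact self_eq_neg.mp h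

end PermAct

section Jop

variable {V : Type*} [AddCommGroup V] [Module ℂ V] [Module ℝ V] [IsScalarTower ℝ ℂ V] {r : ℕ}

theorem Jop_tprod (l : Fin r) (v : Fin r → V) :
    Jop V r l (tprod ℝ v) = tprod ℝ (Function.update v l (Complex.I • v l)) := by
  rw [Jop, map_tprod]
  congr 1
  funext i
  rcases eq_or_ne i l with rfl | h
  · simp [mulI]
  · simp [h]

theorem Jop_mul_self (l : Fin r) : Jop V r l * Jop V r l = -1 := by
  refine PiTensorProduct.ext (MultilinearMap.ext fun v => ?_)
  simp only [LinearMap.compMultilinearMap_apply, Module.End.mul_apply, Jop_tprod,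
    Function.update_idem, Function.update_self, smul_smul, Complex.I_mul_I, neg_one_smul,
    MultilinearMap.map_update_neg, Function.update_eq_self, LinearMap.neg_apply,
    Module.End.one_apply]

theorem permAct_mul_Jop (σ : Equiv.Perm (Fin r)) (l : Fin r) :
    permAct r σ * Jop V r l = Jop V r (σ l) * permAct r σ := by
  refine PiTensorProduct.ext (MultilinearMap.ext fun v => ?_)
  simp only [LinearMap.compMultilinearMap_apply, Module.End.mul_apply, Jop_tprod, permAct_tprod]
  congr 1
  funext i
  rcases eq_or_ne i (σ l) with rfl | h
  · simp
  · have h' : σ.symm i ≠ l := fun hi => h (by rw [← hi, Equiv.apply_symm_apply])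
    simp [Function.update_of_ne h, Function.update_of_ne h']

theorem commute_one_sub_Jop_mul_Jop (l m m' : Fin r) :
    Commute (1 - Jop V r l * Jop V r m) (1 - Jop V r l * Jop V r m') :=
  (Commute.one_left _).sub_left <| (Commute.one_right _).sub_right <|
    ((Jop_comm V r l l).mul_right (Jop_comm V r l m')).mul_left
      ((Jop_comm V r m l).mul_right (Jop_comm V r m m'))

theorem one_sub_Jop_mul_Jop_mul_Jop_eq (l m : Fin r) :
    (1 - Jop V r m * Jop V r l) * Jop V r l = (1 - Jop V r m * Jop V r l) * Jop V r m := by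
  -- `mul_neg_one` goes through `exact`: the `-1` of `Jop_mul_self` matches the ring structure of
  -- `Module.End` only after unfolding instances, which `rw` does not do.
  have hl : Jop V r m * Jop V r l * Jop V r l = -Jop V r m := by
    rw [mul_assoc, Jop_mul_self]; exact mul_neg_one (Jop V r m)
  have hm : Jop V r m * Jop V r l * Jop V r m = -Jop V r l := by
    rw [(Jop_comm V r m l).eq, mul_assoc, Jop_mul_self]; exact mul_neg_one (Jop V r l)
  rw [sub_mul, sub_mul, one_mul, one_mul, hl, hm, sub_neg_eq_add, sub_neg_eq_add, add_comm]

theorem noncommProd_erase_mul_Jop (l₀ l : Fin r)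
    (comm : (Finset.univ.erase l₀ : Set (Fin r)).Pairwise
      (Function.onFun Commute fun m => 1 - Jop V r l₀ * Jop V r m)) :
    (Finset.univ.erase l₀).noncommProd (fun m => 1 - Jop V r l₀ * Jop V r m) comm * Jop V r l =
      (Finset.univ.erase l₀).noncommProd (fun m => 1 - Jop V r l₀ * Jop V r m) comm *
        Jop V r l₀ := by
  rcases eq_or_ne l l₀ with rfl | hl
  · rfl
  · rw [← Finset.noncommProd_erase_mul _ (Finset.mem_erase.2 ⟨hl, Finset.mem_univ l⟩) _ comm
      fun m _ m' _ _ => commute_one_sub_Jop_mul_Jop l₀ m m', mul_assoc, mul_assoc,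
      one_sub_Jop_mul_Jop_mul_Jop_eq]

theorem mul_antisymmetrizer_mul_Jop {P : Module.End ℝ (⨂[ℝ] _ : Fin r, V)}
    (hP : ∀ l m, P * Jop V r l = P * Jop V r m) (l m : Fin r) :
    P * antisymmetrizer V r * Jop V r l = P * antisymmetrizer V r * Jop V r m := by
  simp only [antisymmetrizer, Finset.mul_sum, Finset.sum_mul, mul_smul_comm, smul_mul_assoc,
    mul_assoc, permAct_mul_Jop]
  refine Finset.sum_congr rfl fun σ _ => ?_
  rw [← mul_assoc, hP (σ l) (σ m), mul_assoc]

variable {M : Type*} [AddCommGroup M] [Module ℝ M] {Z : (⨂[ℝ] _ : Fin r, V) →ₗ[ℝ] M}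

theorem apply_tprod_eq_zero_of_eq_I_smul
    (hswap : ∀ a b, a ≠ b → ∀ x, Z (permAct r (Equiv.swap a b) x) = -Z x)
    (hJ : ∀ l m x, Z (Jop V r l x) = Z (Jop V r m x))
    {a b : Fin r} (hab : a ≠ b) {v : Fin r → V} (hv : v a = Complex.I • v b) :
    Z (tprod ℝ v) = 0 := by
  have hJa : Jop V r a (tprod ℝ (Function.update v a (v b))) = tprod ℝ v := by
    rw [Jop_tprod, Function.update_self, Function.update_idem, ← hv, Function.update_eq_self]
  have hJb : Jop V r b (tprod ℝ (Function.update v a (v b))) =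
      permAct r (Equiv.swap a b) (tprod ℝ v) := by
    rw [Jop_tprod, Function.update_of_ne hab.symm, permAct_tprod, Equiv.symm_swap,
      Equiv.comp_swap_eq_update, hv, Function.update_comm hab.symm]
  have h := hswap a b hab (tprod ℝ v)
  rw [← hJb, hJ b a, hJa] at h
  have := IsAddTorsionFree.of_isTorsionFree ℝ M
  exact self_eq_neg.mp h

theorem apply_tprod_eq_zero_of_eq_smul
    (hswap : ∀ a b, a ≠ b → ∀ x, Z (permAct r (Equiv.swap a b) x) = -Z x)
    (hJ : ∀ l m x, Z (Jop V r l x) = Z (Jop V r m x))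
    {a b : Fin r} (hab : a ≠ b) {v : Fin r → V} (c : ℂ) (hv : v a = c • v b) :
    Z (tprod ℝ v) = 0 := by
  have hc : c • v b = c.re • v b + c.im • (Complex.I • v b) := by
    rw [← algebraMap_smul ℂ c.re, ← algebraMap_smul ℂ c.im, smul_smul, ← add_smul,
      Complex.coe_algebraMap, Complex.re_add_im]
  rw [show v = Function.update v a (c • v b) by rw [← hv, Function.update_eq_self], hc,
    MultilinearMap.map_update_add, MultilinearMap.map_update_smul,
    MultilinearMap.map_update_smul, map_add, map_smul, map_smul,
    apply_tprod_eq_zero_of_eq hswap hab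
      (by rw [Function.update_self, Function.update_of_ne hab.symm]),
    apply_tprod_eq_zero_of_eq_I_smul hswap hJ hab
      (by rw [Function.update_self, Function.update_of_ne hab.symm]),
    smul_zero, smul_zero, add_zero]

theorem eq_zero_of_finrank_lt [FiniteDimensional ℂ V] (hn : Module.finrank ℂ V < r)
    (hswap : ∀ a b, a ≠ b → ∀ x, Z (permAct r (Equiv.swap a b) x) = -Z x)
    (hJ : ∀ l m x, Z (Jop V r l x) = Z (Jop V r m x)) : Z = 0 := by
  set bR := Complex.basisOneI.smulTower (Module.finBasis ℂ V)
  refine PiTensorProduct.ext (Module.Basis.ext_multilinear (fun _ => bR) fun j => ?_)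
  obtain ⟨a, b, hab, hj⟩ :=
    Fintype.exists_ne_map_eq_of_card_lt (fun k => (j k).2) (by simpa using hn)
  simp only [LinearMap.compMultilinearMap_apply, LinearMap.zero_apply]
  refine apply_tprod_eq_zero_of_eq_smul hswap hJ hab
    (Complex.basisOneI (j a).1 / Complex.basisOneI (j b).1) ?_
  simp only [bR, Module.Basis.smulTower_apply, hj, smul_smul,
    div_mul_cancel₀ _ (Complex.basisOneI.ne_zero _)]

theorem mul_antisymmetrizer_eq_zero [FiniteDimensional ℂ V] (hn : Module.finrank ℂ V < r)
    {P : Module.End ℝ (⨂[ℝ] _ : Fin r, V)} (hP : ∀ l m, P * Jop V r l = P * Jop V r m) :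
    P * antisymmetrizer V r = 0 :=
  eq_zero_of_finrank_lt hn (fun _ _ hab => mul_antisymmetrizer_apply_permAct_swap P hab)
    fun l m x => by
      rw [← Module.End.mul_apply, ← Module.End.mul_apply, mul_antisymmetrizer_mul_Jop hP l m]

end Jop

/-- If `n = dim_ℂ V < r`, then the element
`z = (1 - J_1J_2)⋯(1 - J_1J_r) · Σ_{σ ∈ S_r} sgn(σ) ρ(σ)` of `End(⨂[ℝ]^r V)` is zero. -/
theorem z_eq_zero
    {V : Type*} [AddCommGroup V] [Module ℂ V] [Module ℝ V] [IsScalarTower ℝ ℂ V]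
    [FiniteDimensional ℂ V]
    (r : ℕ) (hr : 1 ≤ r) (hn : Module.finrank ℂ V < r) :
    ((Finset.univ.erase (⟨0, hr⟩ : Fin r)).noncommProd
        (fun l => 1 - Jop V r ⟨0, hr⟩ * Jop V r l) (by
          intro a _ b _ _
          have h : Commute (Jop V r ⟨0, hr⟩ * Jop V r a) (Jop V r ⟨0, hr⟩ * Jop V r b) :=
            ((Jop_comm V r _ _).mul_right (Jop_comm V r _ b)).mul_left
              ((Jop_comm V r a _).mul_right (Jop_comm V r a b))
          exact (Commute.one_left _).sub_left
            ((Commute.one_right _).sub_right h))) *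
      (∑ σ : Equiv.Perm (Fin r), (Equiv.Perm.sign σ : ℤ) • permAct (V := V) r σ) = 0 :=
  mul_antisymmetrizer_eq_zero hn fun l m =>
    (noncommProd_erase_mul_Jop _ l _).trans (noncommProd_erase_mul_Jop _ m _).symm
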